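/- arXiv:2410.11372 — 2 statements merged into one kernel-verified Lean document; each statement's English description precedes it below -/
import Mathlib

section
/- Among all probability distributions p on ℕ with mean exactly N (N real, N ≥ 0), the minimum of ∑ₙ pₙ ν^n for fixed ν ∈ (0,1) equals (1 - {N}) ν^⌊N⌋ + {N} ν^⌈N⌉, where {N} = N - ⌊N⌋, achieved by the distribution supported on ⌊N⌋ and ⌈N⌉. -/
/-! The sequence `n ↦ ν ^ n` has nondecreasing differences `ν ^ n (ν - 1)`, so it lies above the
line through its values at `⌊N⌋` and `⌊N⌋ + 1`. Averaging that line against any distribution of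
mean `N` gives its value at `N`, which is `(1 - {N}) ν ^ ⌊N⌋ + {N} ν ^ (⌊N⌋ + 1)`; the
distribution on `⌊N⌋, ⌈N⌉` attains it. -/

open Finset

lemma chord_le_of_monotone_diff {u : ℕ → ℝ} (hu : Monotone fun k => u (k + 1) - u k) (a n : ℕ) :
    u a + (u (a + 1) - u a) * ((n : ℝ) - a) ≤ u n := by
  have telescope (k m : ℕ) : u (k + m) - u k = ∑ i ∈ range m, (u (k + i + 1) - u (k + i)) :=
    (sum_range_sub (fun i => u (k + i)) m).symm
  rcases le_total a n with h | h
  · obtain ⟨m, rfl⟩ := Nat.exists_eq_add_of_le h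
    have := card_nsmul_le_sum (range m) _ _ fun i _ => hu (Nat.le_add_right a i)
    rw [← telescope, card_range, nsmul_eq_mul] at this
    push_cast
    linarith
  · obtain ⟨m, rfl⟩ := Nat.exists_eq_add_of_le h
    have := sum_le_card_nsmul (range m) _ _ fun i hi =>
      hu (show n + i ≤ n + m by rw [mem_range] at hi; omega)
    rw [← telescope, card_range, nsmul_eq_mul] at this
    push_cast
    linarith

lemma monotone_pow_succ_sub_pow {ν : ℝ} (hν : 0 ≤ ν) :
    Monotone fun k : ℕ => ν ^ (k + 1) - ν ^ k :=
  monotone_nat_of_le_succ fun k => by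
    have : 0 ≤ ν ^ k * (ν - 1) ^ 2 := by positivity
    ring_nf at this ⊢
    linarith

lemma add_mul_le_tsum_of_hasSum_mean {p u : ℕ → ℝ} {c s x₀ N : ℝ} (hp0 : ∀ n, 0 ≤ p n)
    (hp : HasSum p 1) (hmean : HasSum (fun n : ℕ => (n : ℝ) * p n) N)
    (hu : Summable fun n => p n * u n) (hle : ∀ n : ℕ, c + s * ((n : ℝ) - x₀) ≤ u n) :
    c + s * (N - x₀) ≤ ∑' n, p n * u n := by
  have haffine : HasSum (fun n : ℕ => p n * (c + s * ((n : ℝ) - x₀))) (c + s * (N - x₀)) := by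
    have := (hp.mul_left (c - s * x₀)).add (hmean.mul_left s)
    rw [show (c - s * x₀) * 1 + s * N = c + s * (N - x₀) by ring] at this
    exact this.congr_fun fun n => by ring
  exact hasSum_le (fun n => mul_le_mul_of_nonneg_left (hle n) (hp0 n)) haffine hu.hasSum

lemma natFloor_add_fract {N : ℝ} (hN : 0 ≤ N) : (⌊N⌋₊ : ℝ) + Int.fract N = N := by
  rw [natCast_floor_eq_intCast_floor hN, Int.floor_add_fract]

lemma fract_mul_apply_natCeil {N : ℝ} (hN : 0 ≤ N) (g : ℕ → ℝ) :
    Int.fract N * g ⌈N⌉₊ = Int.fract N * g (⌊N⌋₊ + 1) := by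
  rcases (Int.fract_nonneg N).eq_or_lt with hf | hf
  · simp [← hf]
  have := natFloor_add_fract hN
  have hceil : ⌈N⌉₊ = ⌊N⌋₊ + 1 := (Nat.ceil_eq_iff (Nat.succ_ne_zero _)).mpr
    ⟨by push_cast; linarith, by push_cast; linarith [Int.fract_lt_one N]⟩
  rw [hceil]

lemma hasSum_ite_add_ite_mul (a b : ℕ) (c d : ℝ) (g : ℕ → ℝ) :
    HasSum (fun n => ((if n = a then c else 0) + (if n = b then d else 0)) * g n)
      (c * g a + d * g b) := by
  convert (hasSum_ite_eq a (c * g a)).add (hasSum_ite_eq b (d * g b)) using 2 with n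
  rw [add_mul]
  congr 1 <;> split_ifs with h <;> simp [h]

/-- Among all probability distributions p on ℕ with mean exactly N ≥ 0, the minimum
of ∑ₙ pₙ ν^n for ν ∈ (0,1) equals (1-{N}) ν^⌊N⌋ + {N} ν^⌈N⌉, achieved by the
distribution supported on ⌊N⌋ and ⌈N⌉. -/
theorem stmt_9 (ν : ℝ) (hν : ν ∈ Set.Ioo (0 : ℝ) 1) (N : ℝ) (hN : 0 ≤ N) :
    IsLeast
      {x : ℝ | ∃ p : ℕ → ℝ,
        (∀ n, 0 ≤ p n) ∧ Summable p ∧ (∑' n, p n) = 1 ∧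
        Summable (fun n : ℕ => (n : ℝ) * p n) ∧ (∑' n : ℕ, (n : ℝ) * p n) = N ∧
        Summable (fun n : ℕ => p n * ν ^ n) ∧ x = ∑' n : ℕ, p n * ν ^ n}
      ((1 - Int.fract N) * ν ^ (⌊N⌋₊) + Int.fract N * ν ^ (⌈N⌉₊)) := by
  set a := ⌊N⌋₊
  set f := Int.fract N
  have hN' : (a : ℝ) + f = N := natFloor_add_fract hN
  have hvalue : (1 - f) * ν ^ a + f * ν ^ ⌈N⌉₊ = ν ^ a + (ν ^ (a + 1) - ν ^ a) * (N - a) := by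
    rw [fract_mul_apply_natCeil hN (ν ^ ·)]
    linear_combination (ν ^ (a + 1) - ν ^ a) * hN'
  constructor
  · have hsum (g : ℕ → ℝ) := hasSum_ite_add_ite_mul a ⌈N⌉₊ (1 - f) f g
    have hmean : HasSum (fun n : ℕ => (n : ℝ) * ((if n = a then 1 - f else 0) +
        (if n = ⌈N⌉₊ then f else 0))) N := by
      convert hsum Nat.cast using 1
      · ext n; ring
      · rw [fract_mul_apply_natCeil hN Nat.cast]
        push_cast
        linear_combination -hN'
    refine ⟨fun n => (if n = a then 1 - f else 0) + (if n = ⌈N⌉₊ then f else 0), fun n => ?_,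
      (hsum 1).summable.congr fun n => by simp, ?_, hmean.summable, hmean.tsum_eq,
      (hsum _).summable, (hsum _).tsum_eq.symm⟩
    · have := Int.fract_lt_one N
      positivity
    · simpa using (hsum 1).tsum_eq
  · rintro _ ⟨p, hp0, hp, hp1, hmean, hmeanN, hpν, rfl⟩
    rw [hvalue]
    exact add_mul_le_tsum_of_hasSum_mean hp0 (hp.hasSum_iff.mpr hp1)
      (hmean.hasSum_iff.mpr hmeanN) hpν
      (chord_le_of_monotone_diff (monotone_pow_succ_sub_pow hν.1.le) a)
end

section
/- The ratio of error exponents χ_TMSV/χ_GCS, given approximately by (N_B+1)·(2(N_B + √(N_B(N_B+1))) + 1)/(2N_B+1)², is at least 1 for all N_B ≥ 0, and tends to 1 as N_B → 0 and as N_B → ∞. -/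
/-! The square root `√(N(N+1))` lies between `N` and `N + 1`. Replacing it by `N` bounds the
ratio below by `(N+1)(4N+1)/(2N+1)² ≥ 1`, and replacing it by `N + 1` bounds it above by
`(N+1)(4N+3)/(2N+1)² ≤ 1 + 2/(2N+1)`, which squeezes the ratio to `1` as `N → ∞`.
At `N = 0` the ratio is continuous and equals `1`. -/

open Filter Topology

noncomputable def errorExponentRatio (N : ℝ) : ℝ :=
  (N + 1) * (2 * (N + Real.sqrt (N * (N + 1))) + 1) / (2 * N + 1) ^ 2

lemma le_sqrt_mul_add_one {N : ℝ} (hN : 0 ≤ N) : N ≤ Real.sqrt (N * (N + 1)) :=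
  calc N = Real.sqrt (N * N) := (Real.sqrt_mul_self hN).symm
    _ ≤ Real.sqrt (N * (N + 1)) := Real.sqrt_le_sqrt (by nlinarith)

lemma sqrt_mul_add_one_le {N : ℝ} (hN : 0 ≤ N) : Real.sqrt (N * (N + 1)) ≤ N + 1 :=
  calc Real.sqrt (N * (N + 1)) ≤ Real.sqrt ((N + 1) * (N + 1)) :=
        Real.sqrt_le_sqrt (by nlinarith)
    _ = N + 1 := Real.sqrt_mul_self (by linarith)

lemma one_le_errorExponentRatio {N : ℝ} (hN : 0 ≤ N) : 1 ≤ errorExponentRatio N := by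
  have hs := le_sqrt_mul_add_one hN
  rw [errorExponentRatio, one_le_div (by positivity)]
  nlinarith

lemma errorExponentRatio_le {N : ℝ} (hN : 0 ≤ N) :
    errorExponentRatio N ≤ 1 + 2 * (2 * N + 1)⁻¹ := by
  have hs := sqrt_mul_add_one_le hN
  have hd : 0 < 2 * N + 1 := by linarith
  rw [errorExponentRatio, div_le_iff₀ (by positivity)]
  calc (N + 1) * (2 * (N + Real.sqrt (N * (N + 1))) + 1)
      ≤ (N + 1) * (4 * N + 3) := mul_le_mul_of_nonneg_left (by linarith) (by linarith)
    _ ≤ (2 * N + 1) ^ 2 + 2 * (2 * N + 1) := by nlinarith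
    _ = (1 + 2 * (2 * N + 1)⁻¹) * (2 * N + 1) ^ 2 := by field_simp

lemma continuousAt_errorExponentRatio_zero : ContinuousAt errorExponentRatio 0 := by
  unfold errorExponentRatio
  exact ContinuousAt.div (by fun_prop) (by fun_prop) (by norm_num)

lemma errorExponentRatio_zero : errorExponentRatio 0 = 1 := by
  simp [errorExponentRatio]

lemma tendsto_errorExponentRatio_nhdsWithin_zero :
    Tendsto errorExponentRatio (𝓝[Set.Ici 0] 0) (𝓝 1) := by
  simpa [errorExponentRatio_zero] using
    continuousAt_errorExponentRatio_zero.continuousWithinAt.tendsto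

lemma tendsto_errorExponentRatio_atTop : Tendsto errorExponentRatio atTop (𝓝 1) := by
  have hden : Tendsto (fun N : ℝ => 2 * N + 1) atTop atTop :=
    tendsto_atTop_add_const_right _ _ (tendsto_id.const_mul_atTop two_pos)
  have hupper : Tendsto (fun N : ℝ => 1 + 2 * (2 * N + 1)⁻¹) atTop (𝓝 1) := by
    simpa using tendsto_const_nhds.add (hden.inv_tendsto_atTop.const_mul (2 : ℝ))
  refine tendsto_of_tendsto_of_tendsto_of_le_of_le' tendsto_const_nhds hupper ?_ ?_
  · filter_upwards [eventually_ge_atTop 0] with N hN using one_le_errorExponentRatio hN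
  · filter_upwards [eventually_ge_atTop 0] with N hN using errorExponentRatio_le hN

/-- The ratio of error exponents
f(N_B) = (N_B+1)(2(N_B + √(N_B(N_B+1))) + 1)/(2N_B+1)² is at least 1 for all
N_B ≥ 0, and tends to 1 as N_B → 0⁺ and as N_B → ∞. -/
theorem stmt_12 :
    (∀ N_B : ℝ, 0 ≤ N_B →
      1 ≤ (N_B + 1) * (2 * (N_B + Real.sqrt (N_B * (N_B + 1))) + 1) / (2 * N_B + 1) ^ 2) ∧
    Filter.Tendsto
      (fun N_B : ℝ =>
        (N_B + 1) * (2 * (N_B + Real.sqrt (N_B * (N_B + 1))) + 1) / (2 * N_B + 1) ^ 2)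
      (nhdsWithin 0 (Set.Ici 0)) (nhds 1) ∧
    Filter.Tendsto
      (fun N_B : ℝ =>
        (N_B + 1) * (2 * (N_B + Real.sqrt (N_B * (N_B + 1))) + 1) / (2 * N_B + 1) ^ 2)
      Filter.atTop (nhds 1) :=
  ⟨fun _ hN => one_le_errorExponentRatio hN, tendsto_errorExponentRatio_nhdsWithin_zero,
    tendsto_errorExponentRatio_atTop⟩
end
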